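/- In ℓ¹ (the space of absolutely summable real sequences), if a sequence (z^{(i)})_{i=1}^p and integers 0 = n₀ ≤ n₁ ≤ ⋯ ≤ n_p satisfy ‖z^{(i)}‖ ≥ β/2, Σ_{j>n_i} |z^{(i)}_j| < ε·2^{−i}, and Σ_{j≤n_{i−1}} |z^{(i)}_j| < ε·2^{−i} for each i, then ‖Σ_{i=1}^p z^{(i)}‖ ≥ pβ/2 − 4ε. -/

import Mathlib

open Filter Set MeasureTheory

structure TaggedPartition (a b : ℝ) where
  n : ℕ
  hn : 0 < n
  t : ℕ → ℝ
  s : ℕ → ℝ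
  left : t 0 = a
  right : t n = b
  mono : ∀ i < n, t i < t (i + 1)
  tag : ∀ i < n, s i ∈ Set.Icc (t i) (t (i + 1))

/-- The mesh of a tagged partition: the maximal length of its subintervals. -/
def TaggedPartition.mesh {a b : ℝ} (P : TaggedPartition a b) : ℝ :=
  (Finset.range P.n).sup' (Finset.nonempty_range_iff.mpr P.hn.ne') fun i => P.t (i + 1) - P.t i

/-- The Riemann sum of `f` over a tagged partition. -/
def riemannSum {X : Type*} [AddCommGroup X] [Module ℝ X] {a b : ℝ}
    (f : ℝ → X) (P : TaggedPartition a b) : X :=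
  ∑ i ∈ Finset.range P.n, (P.t (i + 1) - P.t i) • f (P.s i)

/-- `f` is Riemann integrable on `[a,b]` with integral `x`. -/
def HasRiemannIntegral {X : Type*} [NormedAddCommGroup X] [NormedSpace ℝ X]
    (f : ℝ → X) (a b : ℝ) (x : X) : Prop :=
  ∀ ε > 0, ∃ δ > 0, ∀ P : TaggedPartition a b, P.mesh < δ → ‖riemannSum f P - x‖ ≤ ε

/-- `f` is Riemann integrable on `[a,b]`. -/
def RiemannIntegrableOn {X : Type*} [NormedAddCommGroup X] [NormedSpace ℝ X]
    (f : ℝ → X) (a b : ℝ) : Prop :=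
  ∃ x : X, HasRiemannIntegral f a b x

/-!
Restrict each `z i` to its block `[n (i-1), n i)`. The restrictions `y i` have pairwise disjoint
supports, so `‖∑ y i‖ = ∑ ‖y i‖` in `ℓ¹`, while the hypotheses say exactly that
`‖z i - y i‖ < 2ε/2^i`. Two triangle inequalities give
`‖∑ z i‖ ≥ ∑ (‖z i‖ - 2‖z i - y i‖) ≥ pβ/2 - 4ε ∑ 2^{-i} ≥ pβ/2 - 4ε`.
-/

open scoped lp

theorem sum_Icc_div_two_pow_le {ε : ℝ} (hε : 0 ≤ ε) (p : ℕ) :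
    ∑ i ∈ Finset.Icc 1 p, ε / 2 ^ i ≤ ε := by
  rw [← Finset.Ico_add_one_right_eq_Icc, Finset.sum_Ico_eq_sum_range, Nat.add_sub_cancel]
  calc ∑ k ∈ Finset.range p, ε / 2 ^ (1 + k) = ∑ k ∈ Finset.range p, ε / 2 / 2 ^ k := by
        simp only [pow_add, pow_one, div_div]
    _ ≤ ∑' k, ε / 2 / 2 ^ k := (summable_geometric_two' ε).sum_le_tsum _ fun _ _ => by positivity
    _ = ε := tsum_geometric_two' ε

theorem norm_sum_eq_sum_norm_of_pairwise_eq_zero_or {ι E : Type*} [SeminormedAddCommGroup E]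
    {s : Finset ι} {f : ι → E} (hf : (s : Set ι).Pairwise fun i j => f i = 0 ∨ f j = 0) :
    ‖∑ i ∈ s, f i‖ = ∑ i ∈ s, ‖f i‖ := by
  by_cases h : ∃ i ∈ s, f i ≠ 0
  · obtain ⟨i, hi, hfi⟩ := h
    have hother : ∀ j ∈ s, j ≠ i → f j = 0 := fun j hj hji =>
      (hf hj hi hji).resolve_right hfi
    rw [Finset.sum_eq_single_of_mem i hi hother,
      Finset.sum_eq_single_of_mem i hi fun j hj hji => by rw [hother j hj hji, norm_zero]]
  · push Not at h
    rw [Finset.sum_eq_zero h, Finset.sum_eq_zero fun i hi => by rw [h i hi, norm_zero], norm_zero]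

theorem sum_norm_sub_two_mul_norm_sub_le_norm_sum {ι E : Type*} [SeminormedAddCommGroup E]
    (s : Finset ι) (z y : ι → E) (hy : ‖∑ i ∈ s, y i‖ = ∑ i ∈ s, ‖y i‖) :
    ∑ i ∈ s, (‖z i‖ - 2 * ‖z i - y i‖) ≤ ‖∑ i ∈ s, z i‖ :=
  calc ∑ i ∈ s, (‖z i‖ - 2 * ‖z i - y i‖) ≤ ∑ i ∈ s, (‖y i‖ - ‖z i - y i‖) :=
        Finset.sum_le_sum fun i _ => by linarith [norm_sub_norm_le (z i) (y i)]
    _ ≤ ‖∑ i ∈ s, y i‖ - ‖∑ i ∈ s, (z i - y i)‖ := by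
        rw [Finset.sum_sub_distrib, hy]
        gcongr
        exact norm_sum_le _ _
    _ ≤ ‖∑ i ∈ s, z i‖ := by
        rw [Finset.sum_sub_distrib, norm_sub_rev]
        linarith [norm_sub_norm_le (∑ i ∈ s, y i) (∑ i ∈ s, z i)]

theorem Monotone.pairwiseDisjoint_Ico_sub_one {β : Type*} [Preorder β] {n : ℕ → β}
    (hn : Monotone n) : (Set.Ici 1).PairwiseDisjoint fun i => Set.Ico (n (i - 1)) (n i) := by
  rintro (_ | i) hi (_ | k) hk hik
  · simp at hi
  · simp at hi
  · simp at hk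
  · simpa only [Function.onFun, Order.succ_eq_add_one, Nat.add_sub_cancel] using
      hn.pairwise_disjoint_on_Ico_succ (by omega : i ≠ k)

namespace lp

variable {α E : Type*} [NormedAddCommGroup E]

theorem norm_eq_tsum_norm_of_one (f : ℓ¹(α, E)) : ‖f‖ = ∑' i, ‖f i‖ := by
  simp [norm_eq_tsum_rpow (by simp : 0 < (1 : ENNReal).toReal)]

theorem summable_norm_of_one (f : ℓ¹(α, E)) : Summable fun i => ‖f i‖ := by
  simpa using (lp.memℓp f).summable (by simp)

noncomputable def indicator {p : ENNReal} (s : Set α) (f : ℓ^p(α, E)) : ℓ^p(α, E) :=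
  ⟨s.indicator f, (lp.memℓp f).mono' (norm_indicator_le_norm_self f)⟩

theorem coeFn_indicator {p : ENNReal} (s : Set α) (f : ℓ^p(α, E)) :
    ⇑(lp.indicator s f) = s.indicator f := rfl

theorem sub_indicator {p : ENNReal} (s : Set α) (f : ℓ^p(α, E)) :
    f - lp.indicator s f = lp.indicator sᶜ f :=
  lp.ext (Set.indicator_compl s f).symm

theorem norm_indicator_eq_tsum (s : Set α) (f : ℓ¹(α, E)) :
    ‖lp.indicator s f‖ = ∑' i : s, ‖f i‖ := by
  simp only [norm_eq_tsum_norm_of_one, coeFn_indicator, norm_indicator_eq_indicator_norm,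
    tsum_subtype s fun i => ‖f i‖]

theorem norm_sum_eq_sum_norm_of_pairwiseDisjoint {ι : Type*} {t : Finset ι} {y : ι → ℓ¹(α, E)}
    (hy : (t : Set ι).PairwiseDisjoint fun i => Function.support (y i)) :
    ‖∑ i ∈ t, y i‖ = ∑ i ∈ t, ‖y i‖ := by
  have hpt (a : α) : ‖∑ i ∈ t, y i a‖ = ∑ i ∈ t, ‖y i a‖ :=
    norm_sum_eq_sum_norm_of_pairwise_eq_zero_or fun i hi j hj hij => by
      by_contra! h
      exact Set.disjoint_left.mp (hy hi hj hij) h.1 h.2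
  simp only [norm_eq_tsum_norm_of_one, coeFn_sum, Finset.sum_apply, hpt]
  exact Summable.tsum_finsetSum fun i _ => summable_norm_of_one (y i)

theorem norm_indicator_compl_Ico [LinearOrder α] (f : ℓ¹(α, E)) {a b : α} (hab : a ≤ b) :
    ‖lp.indicator (Set.Ico a b)ᶜ f‖ = ∑' i : Set.Iio a, ‖f i‖ + ∑' i : Set.Ici b, ‖f i‖ := by
  have hcompl : (Set.Ico a b)ᶜ = Set.Iio a ∪ Set.Ici b := by
    ext i
    simp only [mem_compl_iff, mem_Ico, mem_union, mem_Iio, mem_Ici, not_and_or, not_le, not_lt]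
  rw [norm_indicator_eq_tsum, hcompl]
  exact Summable.tsum_union_disjoint (Set.Iio_disjoint_Ici hab)
    ((summable_norm_of_one f).subtype _) ((summable_norm_of_one f).subtype _)

end lp

/-- Coordinates are indexed by `ℕ`: the `1`-based coordinate `j > nᵢ` of the paper is the
`0`-based coordinate `j ≥ nᵢ`, and `j ≤ n_{i-1}` is `j < n_{i-1}`. -/
theorem stmt_18_general {β ε : ℝ} (hε : 0 < ε) (p : ℕ)
    (z : ℕ → lp (fun _ : ℕ => ℝ) 1) (n : ℕ → ℕ)
    (hmono : Monotone n)
    (h1 : ∀ i, 1 ≤ i → i ≤ p → β / 2 ≤ ‖z i‖)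
    (h2 : ∀ i, 1 ≤ i → i ≤ p →
      (∑' j : {j : ℕ // n i ≤ j}, |(z i : ∀ _ : ℕ, ℝ) j|) < ε / 2 ^ i)
    (h3 : ∀ i, 1 ≤ i → i ≤ p →
      (∑' j : {j : ℕ // (j : ℕ) < n (i - 1)}, |(z i : ∀ _ : ℕ, ℝ) j|) < ε / 2 ^ i) :
    (p : ℝ) * β / 2 - 4 * ε ≤ ‖∑ i ∈ Finset.Icc 1 p, z i‖ := by
  let y := fun i => lp.indicator (Set.Ico (n (i - 1)) (n i)) (z i)
  have hy : ‖∑ i ∈ Finset.Icc 1 p, y i‖ = ∑ i ∈ Finset.Icc 1 p, ‖y i‖ :=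
    lp.norm_sum_eq_sum_norm_of_pairwiseDisjoint <|
      (hmono.pairwiseDisjoint_Ico_sub_one.subset fun i hi => (Finset.mem_Icc.mp hi).1).mono
        fun _ => Set.support_indicator_subset
  have hzy : ∀ i ∈ Finset.Icc 1 p, ‖z i - y i‖ ≤ 2 * (ε / 2 ^ i) := by
    intro i hi
    obtain ⟨hi1, hip⟩ := Finset.mem_Icc.mp hi
    rw [lp.sub_indicator, lp.norm_indicator_compl_Ico _ (hmono (Nat.sub_le i 1)), two_mul]
    simp only [Real.norm_eq_abs]
    exact (add_lt_add (h3 i hi1 hip) (h2 i hi1 hip)).le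
  calc (p : ℝ) * β / 2 - 4 * ε ≤ ∑ i ∈ Finset.Icc 1 p, (β / 2 - 2 * (2 * (ε / 2 ^ i))) := by
        rw [Finset.sum_sub_distrib, ← Finset.mul_sum, ← Finset.mul_sum, Finset.sum_const,
          Nat.card_Icc, nsmul_eq_mul, Nat.add_sub_cancel]
        linarith [sum_Icc_div_two_pow_le hε.le p]
    _ ≤ ∑ i ∈ Finset.Icc 1 p, (‖z i‖ - 2 * ‖z i - y i‖) := by
        gcongr with i hi
        · exact h1 i (Finset.mem_Icc.mp hi).1 (Finset.mem_Icc.mp hi).2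
        · exact hzy i hi
    _ ≤ ‖∑ i ∈ Finset.Icc 1 p, z i‖ := sum_norm_sub_two_mul_norm_sub_le_norm_sum _ z y hy

/-- the key `ℓ¹` estimate: blocks that are almost disjointly supported and of
norm at least `β/2` have a sum of norm at least `pβ/2 - 4ε`.
(Coordinates are indexed by `ℕ`; the `1`-based coordinate `j > nᵢ` of the paper corresponds to
the `0`-based coordinate `j ≥ nᵢ`, and `j ≤ n_{i-1}` to `j < n_{i-1}`.) -/
theorem stmt_18 {β ε : ℝ} (hβ : 0 < β) (hε : 0 < ε) (p : ℕ)
    (z : ℕ → lp (fun _ : ℕ => ℝ) 1) (n : ℕ → ℕ)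
    (hn0 : n 0 = 0) (hmono : Monotone n)
    (h1 : ∀ i, 1 ≤ i → i ≤ p → β / 2 ≤ ‖z i‖)
    (h2 : ∀ i, 1 ≤ i → i ≤ p →
      (∑' j : {j : ℕ // n i ≤ j}, |(z i : ∀ _ : ℕ, ℝ) j|) < ε / 2 ^ i)
    (h3 : ∀ i, 1 ≤ i → i ≤ p →
      (∑' j : {j : ℕ // (j : ℕ) < n (i - 1)}, |(z i : ∀ _ : ℕ, ℝ) j|) < ε / 2 ^ i) :
    (p : ℝ) * β / 2 - 4 * ε ≤ ‖∑ i ∈ Finset.Icc 1 p, z i‖ :=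
  stmt_18_general hε p z n hmono h1 h2 h3
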